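/- arXiv:1805.10128 — 7 statements merged into one kernel-verified Lean document; each statement's English description precedes it below -/
import Mathlib

section
/- Let k > 0, d > 0, σ_Y² > 0, and m_Y ≤ 1. Define x₂(p) = (k²p(1-p) + (2d²)⁻¹(m_Y - 1 + kp)) / (k²p(1-p) + σ_Y²). Then x₂ is monotonically increasing on [0, 1/2], i.e., for all 0 ≤ p₁ ≤ p₂ ≤ 1/2, x₂(p₁) ≤ x₂(p₂). -/
theorem x2_mono_on_half (k d σY mY : ℝ) (hk : 0 < k) (hd : 0 < d)
    (hσ : 0 < σY) (hm : mY ≤ 1)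
    (x2 : ℝ → ℝ)
    (hx2 : ∀ p, x2 p = (k^2*p*(1-p) + (2*d^2)⁻¹*(mY - 1 + k*p)) /
      (k^2*p*(1-p) + σY)) :
    ∀ p₁ p₂ : ℝ, 0 ≤ p₁ → p₁ ≤ p₂ → p₂ ≤ 1/2 → x2 p₁ ≤ x2 p₂ := by
  intro p₁ p₂ h0 h12 h2
  rw [hx2 p₁, hx2 p₂]
  have hd2 : (0:ℝ) < 2*d^2 := by positivity
  set c := (2*d^2)⁻¹ with hc
  have hcpos : 0 < c := by positivity
  have hA1 : (0:ℝ) ≤ k^2*p₁*(1-p₁) :=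
    mul_nonneg (mul_nonneg (sq_nonneg k) h0) (by linarith)
  have hA2 : (0:ℝ) ≤ k^2*p₂*(1-p₂) :=
    mul_nonneg (mul_nonneg (sq_nonneg k) (by linarith)) (by linarith)
  have hD1 : (0:ℝ) < k^2*p₁*(1-p₁) + σY := by linarith
  have hD2 : (0:ℝ) < k^2*p₂*(1-p₂) + σY := by linarith
  rw [div_le_div_iff₀ hD1 hD2]
  have hAdiff : (0:ℝ) ≤ k^2*p₂*(1-p₂) - k^2*p₁*(1-p₁) := by
    nlinarith [mul_nonneg (mul_nonneg (sq_nonneg k) (by linarith : (0:ℝ) ≤ p₂ - p₁)) (by linarith : (0:ℝ) ≤ 1 - p₁ - p₂)]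
  nlinarith [mul_nonneg hσ.le hAdiff, mul_nonneg (mul_nonneg hcpos.le hσ.le) (mul_nonneg hk.le (by linarith : (0:ℝ) ≤ p₂ - p₁)),
    mul_nonneg (mul_nonneg hcpos.le (by linarith : (0:ℝ) ≤ 1 - mY)) hAdiff,
    mul_nonneg (mul_nonneg (mul_nonneg (mul_nonneg hcpos.le (pow_pos hk 3).le) h0) (le_trans h0 h12)) (by linarith : (0:ℝ) ≤ p₂ - p₁)]
end

section
/- Let k > 0, d > 0, d_D > 0, σ_Y² > 0, m_Y ≤ 1. Set p_c = k/(2d_D²) and suppose p_c < 1 and k²p_c(1-p_c) + (2d²)⁻¹(m_Y - 1 + p_c·k) > 0. Then there exists p* ∈ [0, p_c] ⊆ [0,1] with x₁(p*) = x₂(p*) and x₁(p*) ∈ [0,1], where x₁(p) = 1 - 2d_D²p/k and x₂(p) = (k²p(1-p) + (2d²)⁻¹(m_Y - 1 + kp)) / (k²p(1-p) + σ_Y²). -/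
/-!
The line `x₁` falls from `1` at `p = 0` to `0` at `p = p_c`, while `x₂` is continuous on
`[0, p_c] ⊆ [0, 1]` (its denominator stays positive there), nonpositive at `0` because `m_Y ≤ 1`,
and nonnegative at `p_c` by hypothesis. The two graphs therefore cross on `[0, p_c]`, and on that
interval `x₁` takes values in `[0, 1]`.
-/

open Set

lemma sq_mul_mul_one_sub_add_pos {k σ p : ℝ} (hσ : 0 < σ) (hp : p ∈ Icc (0 : ℝ) 1) :
    0 < k ^ 2 * p * (1 - p) + σ := by
  have := mul_nonneg (mul_nonneg (sq_nonneg k) hp.1) (sub_nonneg.2 hp.2)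
  linarith

lemma continuousOn_sq_mul_mul_one_sub_div {k c m σ : ℝ} (hσ : 0 < σ) :
    ContinuousOn (fun p => (k ^ 2 * p * (1 - p) + c * (m + k * p)) / (k ^ 2 * p * (1 - p) + σ))
      (Icc 0 1) :=
  ContinuousOn.div (by fun_prop) (by fun_prop) fun _ hp => (sq_mul_mul_one_sub_add_pos hσ hp).ne'

lemma one_sub_mul_div_mem_Icc {a k p : ℝ} (ha : 0 < a) (hk : 0 < k) (hp : p ∈ Icc 0 (k / a)) :
    1 - a * p / k ∈ Icc (0 : ℝ) 1 := by
  have hap : a * p ≤ k := by simpa only [mul_comm] using (le_div_iff₀ ha).1 hp.2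
  exact ⟨sub_nonneg.2 ((div_le_one hk).2 hap),
    sub_le_self _ (div_nonneg (mul_nonneg ha.le hp.1) hk.le)⟩

theorem nash_exists_case_a_general (k d dD σY mY : ℝ) (hk : 0 < k)
    (hdD : 0 < dD) (hσ : 0 < σY) (hm : mY ≤ 1)
    (pc : ℝ) (hpc : pc = k / (2*dD^2)) (hpc1 : pc < 1)
    (hcond : 0 < k^2*pc*(1-pc) + (2*d^2)⁻¹*(mY - 1 + pc*k))
    (x1 x2 : ℝ → ℝ)
    (hx1 : ∀ p, x1 p = 1 - 2*dD^2*p/k)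
    (hx2 : ∀ p, x2 p = (k^2*p*(1-p) + (2*d^2)⁻¹*(mY - 1 + k*p)) /
      (k^2*p*(1-p) + σY)) :
    ∃ p : ℝ, p ∈ Set.Icc 0 pc ∧ p ∈ Set.Icc (0:ℝ) 1 ∧
      x1 p = x2 p ∧ x1 p ∈ Set.Icc (0:ℝ) 1 := by
  have hpc0 : 0 ≤ pc := hpc ▸ by positivity
  have hsub : Icc 0 pc ⊆ Icc (0 : ℝ) 1 := Icc_subset_Icc_right hpc1.le
  have hx1_cont : ContinuousOn x1 (Icc 0 pc) := by
    simp only [funext hx1]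
    fun_prop
  have hx2_cont : ContinuousOn x2 (Icc 0 pc) := by
    rw [funext hx2]
    exact (continuousOn_sq_mul_mul_one_sub_div (m := mY - 1) hσ).mono hsub
  have hx2_zero : x2 0 ≤ x1 0 := calc
    x2 0 = (2 * d ^ 2)⁻¹ * (mY - 1) / σY := by simp only [hx2]; ring
    _ ≤ 0 := div_nonpos_of_nonpos_of_nonneg
      (mul_nonpos_of_nonneg_of_nonpos (by positivity) (by linarith)) hσ.le
    _ ≤ x1 0 := by simp [hx1]
  have hx1_pc : x1 pc ≤ x2 pc := by
    have hzero : x1 pc = 0 := by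
      rw [hx1, hpc]
      field_simp
      ring
    rw [hzero, hx2, mul_comm k pc]
    exact div_nonneg hcond.le (sq_mul_mul_one_sub_add_pos hσ (hsub ⟨hpc0, le_rfl⟩)).le
  obtain ⟨p, hp, hp_eq⟩ := isPreconnected_Icc.intermediate_value₂ (left_mem_Icc.2 hpc0)
    (right_mem_Icc.2 hpc0) hx2_cont hx1_cont hx2_zero hx1_pc
  refine ⟨p, hp, hsub hp, hp_eq.symm, ?_⟩
  rw [hx1]
  exact one_sub_mul_div_mem_Icc (by positivity) hk (hpc ▸ hp)

theorem nash_exists_case_a (k d dD σY mY : ℝ) (hk : 0 < k) (hd : 0 < d)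
    (hdD : 0 < dD) (hσ : 0 < σY) (hm : mY ≤ 1)
    (pc : ℝ) (hpc : pc = k / (2*dD^2)) (hpc1 : pc < 1)
    (hcond : 0 < k^2*pc*(1-pc) + (2*d^2)⁻¹*(mY - 1 + pc*k))
    (x1 x2 : ℝ → ℝ)
    (hx1 : ∀ p, x1 p = 1 - 2*dD^2*p/k)
    (hx2 : ∀ p, x2 p = (k^2*p*(1-p) + (2*d^2)⁻¹*(mY - 1 + k*p)) /
      (k^2*p*(1-p) + σY)) :
    ∃ p : ℝ, p ∈ Set.Icc 0 pc ∧ p ∈ Set.Icc (0:ℝ) 1 ∧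
      x1 p = x2 p ∧ x1 p ∈ Set.Icc (0:ℝ) 1 :=
  nash_exists_case_a_general k d dD σY mY hk hdD hσ hm pc hpc hpc1 hcond x1 x2 hx1 hx2
end

section
/- Let k > 0, d > 0, d_D > 0, σ_Y² > 0, m_Y ≤ 1. Suppose k/(2d_D²) ≥ 1 and (2d²)⁻¹(m_Y - 1 + k)/σ_Y² + 2d_D²/k ≥ 1. Then there exists p* ∈ [0,1] with x₁(p*) = x₂(p*) and both x₁(p*) ∈ [0,1] and p* ∈ [0,1], where x₁(p) = 1 - 2d_D²p/k and x₂(p) = (k²p(1-p) + (2d²)⁻¹(m_Y - 1 + kp)) / (k²p(1-p) + σ_Y²). -/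
theorem nash_exists_case_b (k d dD σY mY : ℝ) (hk : 0 < k) (hd : 0 < d)
    (hdD : 0 < dD) (hσ : 0 < σY) (hm : mY ≤ 1)
    (hpc : 1 ≤ k / (2*dD^2))
    (hcond : 1 ≤ (2*d^2)⁻¹*(mY - 1 + k) / σY + 2*dD^2/k)
    (x1 x2 : ℝ → ℝ)
    (hx1 : ∀ p, x1 p = 1 - 2*dD^2*p/k)
    (hx2 : ∀ p, x2 p = (k^2*p*(1-p) + (2*d^2)⁻¹*(mY - 1 + k*p)) /
      (k^2*p*(1-p) + σY)) :
    ∃ p : ℝ, p ∈ Set.Icc (0:ℝ) 1 ∧ x1 p = x2 p ∧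
      x1 p ∈ Set.Icc (0:ℝ) 1 := by
  have hkle : 2*dD^2 ≤ k := by
    have h2 : 0 < 2*dD^2 := by positivity
    rw [le_div_iff₀ h2] at hpc; linarith
  set f : ℝ → ℝ := fun p => x1 p - x2 p with hf
  have hdenom : ∀ p ∈ Set.Icc (0:ℝ) 1, 0 < k^2*p*(1-p) + σY := by
    intro p hp
    have h1 : 0 ≤ k^2*p*(1-p) :=
      mul_nonneg (mul_nonneg (sq_nonneg k) hp.1) (by linarith [hp.2])
    linarith
  have hcont : ContinuousOn f (Set.Icc 0 1) := by
    have hfeq : f = fun p => (1 - 2*dD^2*p/k) -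
        (k^2*p*(1-p) + (2*d^2)⁻¹*(mY - 1 + k*p)) / (k^2*p*(1-p) + σY) := by
      funext p; simp only [hf, hx1, hx2]
    rw [hfeq]
    apply ContinuousOn.sub (by fun_prop)
    exact ContinuousOn.div (by fun_prop) (by fun_prop)
      (fun p hp => (hdenom p hp).ne')
  have hf1 : f 1 ≤ 0 := by
    have h1 : x2 1 = (2*d^2)⁻¹*(mY - 1 + k) / σY := by rw [hx2]; norm_num
    have h2 : x1 1 = 1 - 2*dD^2/k := by rw [hx1]; ring
    simp only [hf, h1, h2]; linarith
  have hf0 : 0 ≤ f 0 := by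
    have hx20 : x2 0 ≤ 0 := by
      rw [hx2]
      have hnum : k^2*0*(1-0) + (2*d^2)⁻¹*(mY - 1 + k*0) ≤ 0 := by
        have : (2*d^2)⁻¹*(mY - 1 + k*0) ≤ 0 := by
          apply mul_nonpos_of_nonneg_of_nonpos (by positivity); linarith
        linarith
      have hden : 0 < k^2*0*(1-0) + σY := by linarith [hdenom 0 (by norm_num)]
      exact div_nonpos_of_nonpos_of_nonneg hnum hden.le
    simp only [hf, hx1]
    have : (1:ℝ) - 2*dD^2*0/k = 1 := by ring_nf
    rw [this]; linarith
  have hmem : (0:ℝ) ∈ Set.Icc (f 1) (f 0) := ⟨hf1, hf0⟩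
  have := intermediate_value_Icc' (by norm_num : (0:ℝ) ≤ 1) hcont hmem
  obtain ⟨p, hp, hfp⟩ := this
  refine ⟨p, hp, by simpa [hf, sub_eq_zero] using hfp, ?_⟩
  rw [hx1]
  constructor
  · rw [sub_nonneg, div_le_one hk]
    nlinarith [hp.1, hp.2, sq_nonneg dD]
  · rw [sub_le_self_iff]
    apply div_nonneg _ hk.le
    nlinarith [hp.1, sq_nonneg dD]
end

section
/- With the parameters k = 0.7, m_Y = 0.8, d = 2, d_D = 0.355, σ_Y² = 0.1, the functions x₁(p) = 1 - 2d_D²p/k and x₂(p) = (k²p(1-p) + (2d²)⁻¹(m_Y - 1 + kp))/(k²p(1-p) + σ_Y²) intersect at (at least) two distinct points in (0,1) × (0,1). -/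
theorem two_nash_equilibria
    (k mY d dD σY : ℝ)
    (hk : k = 0.7) (hm : mY = 0.8) (hd : d = 2) (hdD : dD = 0.355)
    (hσ : σY = 0.1)
    (x1 x2 : ℝ → ℝ)
    (hx1 : ∀ p, x1 p = 1 - 2*dD^2*p/k)
    (hx2 : ∀ p, x2 p = (k^2*p*(1-p) + (2*d^2)⁻¹*(mY - 1 + k*p)) /
      (k^2*p*(1-p) + σY)) :
    ∃ p₁ p₂ : ℝ, p₁ ≠ p₂ ∧
      p₁ ∈ Set.Ioo (0:ℝ) 1 ∧ p₂ ∈ Set.Ioo (0:ℝ) 1 ∧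
      x1 p₁ = x2 p₁ ∧ x1 p₂ = x2 p₂ ∧
      x1 p₁ ∈ Set.Ioo (0:ℝ) 1 ∧ x1 p₂ ∈ Set.Ioo (0:ℝ) 1 := by
  subst hk hm hd hdD hσ
  set g : ℝ → ℝ := fun p =>
    (1 - 2*(0.355:ℝ)^2*p/0.7) * ((0.7:ℝ)^2*p*(1-p) + 0.1)
      - ((0.7:ℝ)^2*p*(1-p) + (2*(2:ℝ)^2)⁻¹*(0.8 - 1 + 0.7*p)) with hg
  have hgcont : ContinuousOn g (Set.Icc (0.8:ℝ) 0.99) := by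
    rw [hg]; fun_prop
  have key : ∀ p ∈ Set.Ioo (0:ℝ) 1, g p = 0 →
      x1 p = x2 p ∧ x1 p ∈ Set.Ioo (0:ℝ) 1 := by
    intro p hp hgp
    obtain ⟨hp0, hp1⟩ := hp
    have hD : (0.7:ℝ)^2*p*(1-p) + 0.1 > 0 := by nlinarith
    rw [hg] at hgp
    simp only at hgp
    refine ⟨?_, ?_, ?_⟩
    · rw [hx1, hx2, eq_div_iff (ne_of_gt hD)]
      linarith [hgp]
    · rw [hx1, sub_pos, div_lt_one (by norm_num : (0:ℝ) < 0.7)]; nlinarith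
    · rw [hx1]
      have : (0:ℝ) < 2*(0.355:ℝ)^2*p/0.7 := div_pos (by nlinarith) (by norm_num)
      linarith
  have hg092 : g 0.92 < 0 := by rw [hg]; norm_num
  have hg08 : (0:ℝ) < g 0.8 := by rw [hg]; norm_num
  have hg099 : (0:ℝ) < g 0.99 := by rw [hg]; norm_num
  have h1 : (0:ℝ) ∈ g '' Set.Ioo (0.8:ℝ) 0.92 := by
    apply intermediate_value_Ioo' (by norm_num : (0.8:ℝ) ≤ 0.92)
      (hgcont.mono (by intro x hx; exact ⟨hx.1, le_trans hx.2 (by norm_num)⟩))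
    exact ⟨hg092, hg08⟩
  have h2 : (0:ℝ) ∈ g '' Set.Ioo (0.92:ℝ) 0.99 := by
    apply intermediate_value_Ioo (by norm_num : (0.92:ℝ) ≤ 0.99)
      (hgcont.mono (by intro x hx; exact ⟨le_trans (by norm_num) hx.1, hx.2⟩))
    exact ⟨hg092, hg099⟩
  obtain ⟨p₁, hp₁mem, hp₁⟩ := h1
  obtain ⟨p₂, hp₂mem, hp₂⟩ := h2
  have hp₁I : p₁ ∈ Set.Ioo (0:ℝ) 1 := ⟨by linarith [hp₁mem.1], by linarith [hp₁mem.2]⟩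
  have hp₂I : p₂ ∈ Set.Ioo (0:ℝ) 1 := ⟨by linarith [hp₂mem.1], by linarith [hp₂mem.2]⟩
  obtain ⟨he₁, hx₁I⟩ := key p₁ hp₁I hp₁
  obtain ⟨he₂, hx₂I⟩ := key p₂ hp₂I hp₂
  have hne : p₁ ≠ p₂ :=
    ne_of_lt (lt_trans hp₁mem.2 hp₂mem.1)
  exact ⟨p₁, p₂, hne, hp₁I, hp₂I, he₁, he₂, hx₁I, hx₂I⟩
end

section
/- Let B > 0, k > 0, and 0 < A < k. The quadratic Q(p) = AB - 2Bkp + k²(A-k)p², whose leading coefficient k²(A-k) is negative, has exactly one positive root, given by p* = B/(k(k-A)) · (√(1 + (A/B)(k-A)) - 1), and moreover p* ∈ (0, 1]. -/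
/-!
By the quadratic formula, the discriminant of `Q` is `4 B² k² (1 + (A/B)(k - A))`, so the roots of
`Q` are `p*` and `-B / (k (k - A)) · (√(1 + (A/B)(k - A)) + 1) < 0`; hence `p*` is the only
positive root. The bound `√(1 + x) ≤ 1 + x/2` gives `p* ≤ A / (2k) < 1`.
-/

open Real

noncomputable def positiveRoot (A B k : ℝ) : ℝ :=
  B / (k * (k - A)) * (√(1 + A / B * (k - A)) - 1)

noncomputable def negativeRoot (A B k : ℝ) : ℝ :=
  -(B / (k * (k - A)) * (√(1 + A / B * (k - A)) + 1))

section

variable {A B k : ℝ}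

theorem div_mul_sub_pos (hB : 0 < B) (hA0 : 0 < A) (hAk : A < k) : 0 < A / B * (k - A) :=
  mul_pos (div_pos hA0 hB) (sub_pos.mpr hAk)

theorem quadratic_eq_zero_iff_eq_root (hB : B ≠ 0) (hk : k ≠ 0) (hAk : A ≠ k)
    (hD : 0 ≤ 1 + A / B * (k - A)) (p : ℝ) :
    A * B - 2 * B * k * p + k ^ 2 * (A - k) * p ^ 2 = 0 ↔
      p = positiveRoot A B k ∨ p = negativeRoot A B k := by
  have hlead : k ^ 2 * (A - k) ≠ 0 := mul_ne_zero (pow_ne_zero 2 hk) (sub_ne_zero.mpr hAk)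
  have hdiscrim : discrim (k ^ 2 * (A - k)) (-2 * B * k) (A * B) =
      (2 * B * k * √(1 + A / B * (k - A))) * (2 * B * k * √(1 + A / B * (k - A))) := by
    rw [discrim, show ∀ x y : ℝ, x * y * (x * y) = x * x * (y * y) from fun _ _ => by ring,
      mul_self_sqrt hD]
    field_simp
    ring
  have hneg : (-(-2 * B * k) + 2 * B * k * √(1 + A / B * (k - A))) / (2 * (k ^ 2 * (A - k))) =
      negativeRoot A B k := by
    rw [negativeRoot]
    field_simp
    ring
  have hpos : (-(-2 * B * k) - 2 * B * k * √(1 + A / B * (k - A))) / (2 * (k ^ 2 * (A - k))) =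
      positiveRoot A B k := by
    rw [positiveRoot]
    field_simp
    ring
  rw [← hneg, ← hpos, or_comm, ← quadratic_eq_zero_iff hlead hdiscrim p]
  ring_nf

theorem one_lt_sqrt_one_add (hB : 0 < B) (hA0 : 0 < A) (hAk : A < k) :
    1 < √(1 + A / B * (k - A)) := by
  rw [lt_sqrt zero_le_one]
  linarith [div_mul_sub_pos hB hA0 hAk]

theorem positiveRoot_pos (hB : 0 < B) (hA0 : 0 < A) (hAk : A < k) :
    0 < positiveRoot A B k := by
  have hkA : 0 < k - A := sub_pos.mpr hAk
  have hk : 0 < k := hA0.trans hAk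
  have hsqrt : 0 < √(1 + A / B * (k - A)) - 1 := sub_pos.mpr (one_lt_sqrt_one_add hB hA0 hAk)
  unfold positiveRoot
  positivity

theorem negativeRoot_neg (hB : 0 < B) (hA0 : 0 < A) (hAk : A < k) :
    negativeRoot A B k < 0 := by
  have hkA : 0 < k - A := sub_pos.mpr hAk
  have hk : 0 < k := hA0.trans hAk
  unfold negativeRoot
  rw [neg_neg_iff_pos]
  positivity

theorem positiveRoot_le (hB : 0 < B) (hA0 : 0 < A) (hAk : A < k) :
    positiveRoot A B k ≤ A / (2 * k) := by
  have hkA : 0 < k - A := sub_pos.mpr hAk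
  have hk : 0 < k := hA0.trans hAk
  have hsqrt := sqrt_one_add_le (x := A / B * (k - A)) (by linarith [div_mul_sub_pos hB hA0 hAk])
  calc positiveRoot A B k ≤ B / (k * (k - A)) * (A / B * (k - A) / 2) := by
        unfold positiveRoot; gcongr; linarith
    _ = A / (2 * k) := by field_simp

end

theorem quadratic_unique_positive_root_general (A B k : ℝ)
    (hB : 0 < B) (hA0 : 0 < A) (hAk : A < k)
    (Q : ℝ → ℝ) (hQ : ∀ p, Q p = A*B - 2*B*k*p + k^2*(A-k)*p^2)
    (pstar : ℝ)
    (hp : pstar = B/(k*(k-A)) * (Real.sqrt (1 + (A/B)*(k-A)) - 1)) :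
    k^2*(A-k) < 0 ∧ Q pstar = 0 ∧ (∀ p : ℝ, 0 < p → Q p = 0 → p = pstar) ∧
    0 < pstar ∧ pstar ≤ 1 := by
  have hk : 0 < k := hA0.trans hAk
  have hroot (p : ℝ) : Q p = 0 ↔ p = positiveRoot A B k ∨ p = negativeRoot A B k := by
    rw [hQ]
    exact quadratic_eq_zero_iff_eq_root hB.ne' hk.ne' hAk.ne
      (by linarith [div_mul_sub_pos hB hA0 hAk]) p
  obtain rfl : pstar = positiveRoot A B k := hp
  refine ⟨mul_neg_of_pos_of_neg (by positivity) (sub_neg.mpr hAk), (hroot _).2 (Or.inl rfl),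
    fun p hp0 hQp => ((hroot p).1 hQp).resolve_right ?_, positiveRoot_pos hB hA0 hAk,
    (positiveRoot_le hB hA0 hAk).trans ?_⟩
  · rintro rfl
    exact (negativeRoot_neg hB hA0 hAk).not_gt hp0
  · rw [div_le_one (by positivity)]
    linarith

theorem quadratic_unique_positive_root (A B k : ℝ)
    (hB : 0 < B) (hk : 0 < k) (hA0 : 0 < A) (hAk : A < k)
    (Q : ℝ → ℝ) (hQ : ∀ p, Q p = A*B - 2*B*k*p + k^2*(A-k)*p^2)
    (pstar : ℝ)
    (hp : pstar = B/(k*(k-A)) * (Real.sqrt (1 + (A/B)*(k-A)) - 1)) :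
    k^2*(A-k) < 0 ∧ Q pstar = 0 ∧ (∀ p : ℝ, 0 < p → Q p = 0 → p = pstar) ∧
    0 < pstar ∧ pstar ≤ 1 :=
  quadratic_unique_positive_root_general A B k hB hA0 hAk Q hQ pstar hp
end

section
/- Let B > 0, k > 0 and A satisfy 0 < A < k. Define g(p) = (Ap - kp²)/(B + k²p(1-p)) for p ∈ [0,1]. Then g'(p) = 0 if and only if Q(p) := AB - 2Bkp + k²(A-k)p² = 0, and g attains its maximum on [0,1] at p* = B/(k(k-A))·(√(1 + (A/B)(k-A)) - 1). -/
/-! On `[0, 1]` the denominator `B + k²p(1-p)` is positive, and the quotient rule gives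
`g' = Q / (B + k²p(1-p))²`, so `g'` and `Q` vanish together. The quadratic `Q` has
`Q(0) = AB > 0`, `Q(1) < 0` and negative leading coefficient `k²(A-k)`; `p*` is its positive root,
so it lies in `(0, 1)`, `Q ≥ 0` on `[0, p*]` and `Q ≤ 0` on `[p*, 1]`. Hence `g` increases up to
`p*` and decreases after it. -/

open Set

theorem isMaxOn_Icc_of_monotoneOn_of_antitoneOn {α β : Type*} [LinearOrder α] [Preorder β]
    {f : α → β} {a b c : α} (hac : a ≤ c) (hcb : c ≤ b) (hmono : MonotoneOn f (Icc a c))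
    (hanti : AntitoneOn f (Icc c b)) : IsMaxOn f (Icc a b) c := by
  refine isMaxOn_iff.2 fun x ⟨hax, hxb⟩ => ?_
  rcases le_total x c with hxc | hcx
  · exact hmono ⟨hax, hxc⟩ ⟨hac, le_rfl⟩ hxc
  · exact hanti ⟨le_rfl, hcb⟩ ⟨hcx, hxb⟩ hcx

namespace GovUtility

theorem denom_pos {B k p : ℝ} (hB : 0 < B) (hp : p ∈ Icc (0 : ℝ) 1) :
    0 < B + k ^ 2 * p * (1 - p) := by
  have : 0 ≤ k ^ 2 * p * (1 - p) := by
    have := hp.1; have : 0 ≤ 1 - p := sub_nonneg.2 hp.2; positivity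
  linarith

variable (A B k : ℝ)

noncomputable def utility (p : ℝ) : ℝ := (A * p - k * p ^ 2) / (B + k ^ 2 * p * (1 - p))

def criticalQuadratic (p : ℝ) : ℝ := A * B - 2 * B * k * p + k ^ 2 * (A - k) * p ^ 2

noncomputable def optimum : ℝ := B / (k * (k - A)) * (√(1 + A / B * (k - A)) - 1)

theorem hasDerivAt_utility {p : ℝ} (hD : B + k ^ 2 * p * (1 - p) ≠ 0) :
    HasDerivAt (utility A B k) (criticalQuadratic A B k p / (B + k ^ 2 * p * (1 - p)) ^ 2) p := by
  have hnum : HasDerivAt (fun x => A * x - k * x ^ 2) (A - k * (2 * p)) p := by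
    simpa using ((hasDerivAt_id p).const_mul A).fun_sub ((hasDerivAt_pow 2 p).const_mul k)
  have hden : HasDerivAt (fun x => B + k ^ 2 * x * (1 - x)) (k ^ 2 * (1 - p) + -(k ^ 2 * p)) p := by
    simpa using (((hasDerivAt_id p).const_mul (k ^ 2)).mul
      ((hasDerivAt_id p).const_sub 1)).const_add B
  refine (hnum.div hden hD).congr_deriv ?_
  unfold criticalQuadratic
  ring

theorem criticalQuadratic_optimum (hB : B ≠ 0) (hk : k ≠ 0) (hAk : A ≠ k)
    (hdisc : 0 ≤ 1 + A / B * (k - A)) : criticalQuadratic A B k (optimum A B k) = 0 := by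
  have hsq : B * √(1 + A / B * (k - A)) ^ 2 = B + A * (k - A) := by
    rw [Real.sq_sqrt hdisc]; field_simp
  have hkA : k - A ≠ 0 := sub_ne_zero.2 hAk.symm
  unfold criticalQuadratic optimum
  generalize √(1 + A / B * (k - A)) = s at hsq ⊢
  field_simp
  linear_combination (-(B * (k - A))) * hsq

theorem criticalQuadratic_eq_mul_of_root {r : ℝ} (hr : criticalQuadratic A B k r = 0) (p : ℝ) :
    criticalQuadratic A B k p = (p - r) * (k ^ 2 * (A - k) * (p + r) - 2 * B * k) := by
  unfold criticalQuadratic at *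
  linear_combination hr

theorem rootCofactor_neg (hB : 0 < B) (hk : 0 < k) (hAk : A < k) {p r : ℝ} (hpr : 0 ≤ p + r) :
    k ^ 2 * (A - k) * (p + r) - 2 * B * k < 0 := by
  have : 0 ≤ k ^ 2 * (k - A) * (p + r) := by have := sub_pos.2 hAk; positivity
  nlinarith [mul_pos hB hk]

theorem criticalQuadratic_nonneg_of_le_root (hB : 0 < B) (hk : 0 < k) (hAk : A < k) {r p : ℝ}
    (hr : criticalQuadratic A B k r = 0) (hp : 0 ≤ p) (hpr : p ≤ r) :
    0 ≤ criticalQuadratic A B k p := by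
  rw [criticalQuadratic_eq_mul_of_root A B k hr]
  exact mul_nonneg_of_nonpos_of_nonpos (by linarith)
    (rootCofactor_neg A B k hB hk hAk (by linarith)).le

theorem criticalQuadratic_nonpos_of_root_le (hB : 0 < B) (hk : 0 < k) (hAk : A < k) {r p : ℝ}
    (hr : criticalQuadratic A B k r = 0) (hr0 : 0 ≤ r) (hrp : r ≤ p) :
    criticalQuadratic A B k p ≤ 0 := by
  rw [criticalQuadratic_eq_mul_of_root A B k hr]
  exact mul_nonpos_of_nonneg_of_nonpos (by linarith)
    (rootCofactor_neg A B k hB hk hAk (by linarith)).le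

theorem criticalQuadratic_one_neg (hB : 0 < B) (hk : 0 < k) (hAk : A < k) :
    criticalQuadratic A B k 1 < 0 := by
  unfold criticalQuadratic
  nlinarith [mul_pos hB hk, mul_pos (pow_pos hk 2) (sub_pos.2 hAk)]

theorem optimum_pos (hB : 0 < B) (hk : 0 < k) (hA : 0 < A) (hAk : A < k) :
    0 < optimum A B k := by
  have hkA := sub_pos.2 hAk
  have : 1 < √(1 + A / B * (k - A)) := by
    rw [Real.lt_sqrt zero_le_one]
    have : 0 < A / B * (k - A) := by positivity
    linarith
  unfold optimum
  have := sub_pos.2 this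
  positivity

theorem optimum_lt_one (hB : 0 < B) (hk : 0 < k) (hA : 0 < A) (hAk : A < k) :
    optimum A B k < 1 := by
  have hkA := sub_pos.2 hAk
  have hroot := criticalQuadratic_optimum A B k hB.ne' hk.ne' hAk.ne (by positivity)
  by_contra! h
  exact (criticalQuadratic_one_neg A B k hB hk hAk).not_ge
    (criticalQuadratic_nonneg_of_le_root A B k hB hk hAk hroot zero_le_one h)

theorem continuousOn_utility (hB : 0 < B) : ContinuousOn (utility A B k) (Icc 0 1) :=
  fun _ hp => (hasDerivAt_utility A B k (denom_pos hB hp).ne').continuousAt.continuousWithinAt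

theorem monotoneOn_utility (hB : 0 < B) (hk : 0 < k) (hAk : A < k) {r : ℝ}
    (hr : criticalQuadratic A B k r = 0) (hr1 : r ≤ 1) : MonotoneOn (utility A B k) (Icc 0 r) := by
  have hsub : Icc 0 r ⊆ Icc 0 1 := Icc_subset_Icc le_rfl hr1
  refine monotoneOn_of_hasDerivWithinAt_nonneg (convex_Icc _ _)
    ((continuousOn_utility A B k hB).mono hsub) (fun p hp => (hasDerivAt_utility A B k
      (denom_pos hB (hsub (interior_subset hp))).ne').hasDerivWithinAt) fun p hp => ?_
  rw [interior_Icc] at hp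
  exact div_nonneg (criticalQuadratic_nonneg_of_le_root A B k hB hk hAk hr hp.1.le hp.2.le)
    (sq_nonneg _)

theorem antitoneOn_utility (hB : 0 < B) (hk : 0 < k) (hAk : A < k) {r : ℝ}
    (hr : criticalQuadratic A B k r = 0) (hr0 : 0 ≤ r) : AntitoneOn (utility A B k) (Icc r 1) := by
  have hsub : Icc r 1 ⊆ Icc 0 1 := Icc_subset_Icc hr0 le_rfl
  refine antitoneOn_of_hasDerivWithinAt_nonpos (convex_Icc _ _)
    ((continuousOn_utility A B k hB).mono hsub) (fun p hp => (hasDerivAt_utility A B k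
      (denom_pos hB (hsub (interior_subset hp))).ne').hasDerivWithinAt) fun p hp => ?_
  rw [interior_Icc] at hp
  exact div_nonpos_of_nonpos_of_nonneg
    (criticalQuadratic_nonpos_of_root_le A B k hB hk hAk hr hr0 hp.1.le) (sq_nonneg _)

end GovUtility

open GovUtility in
theorem gov_utility_critical_points (A B k : ℝ)
    (hB : 0 < B) (hk : 0 < k) (hA0 : 0 < A) (hAk : A < k)
    (g Q : ℝ → ℝ)
    (hg : ∀ p, g p = (A*p - k*p^2)/(B + k^2*p*(1-p)))
    (hQ : ∀ p, Q p = A*B - 2*B*k*p + k^2*(A-k)*p^2)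
    (pstar : ℝ)
    (hp : pstar = B/(k*(k-A)) * (Real.sqrt (1 + (A/B)*(k-A)) - 1)) :
    (∀ p ∈ Set.Icc (0:ℝ) 1, (deriv g p = 0 ↔ Q p = 0)) ∧
    IsMaxOn g (Set.Icc (0:ℝ) 1) pstar := by
  obtain rfl : g = utility A B k := funext hg
  obtain rfl : Q = criticalQuadratic A B k := funext hQ
  obtain rfl : pstar = optimum A B k := hp
  refine ⟨fun p hp => ?_, ?_⟩
  · have hD := denom_pos (k := k) hB hp
    rw [(hasDerivAt_utility A B k hD.ne').deriv, div_eq_zero_iff,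
      or_iff_left (pow_ne_zero 2 hD.ne')]
  have hroot := criticalQuadratic_optimum A B k hB.ne' hk.ne' hAk.ne
    (by have := sub_pos.2 hAk; positivity)
  have h0 := (optimum_pos A B k hB hk hA0 hAk).le
  have h1 := (optimum_lt_one A B k hB hk hA0 hAk).le
  exact isMaxOn_Icc_of_monotoneOn_of_antitoneOn h0 h1
    (monotoneOn_utility A B k hB hk hAk hroot h1) (antitoneOn_utility A B k hB hk hAk hroot h0)
end

section
/- Let B > 0, k > 0, 0 < A < k, and set p* = B/(k(k-A))·(√(1 + (A/B)(k-A)) - 1). Then p* is increasing in A on (0, k): that is, for 0 < A₁ < A₂ < k (with B, k fixed), p*(A₁) < p*(A₂). -/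
lemma pstar_alt (B k A : ℝ) (hB : 0 < B) (hk : 0 < k) (hA : 0 < A) (hAk : A < k) :
    B/(k*(k-A)) * (Real.sqrt (1 + (A/B)*(k-A)) - 1)
      = A / (k * (Real.sqrt (1 + (A/B)*(k-A)) + 1)) := by
  have hkA : 0 < k - A := by linarith
  have hxpos : (0:ℝ) < 1 + (A/B)*(k-A) := by
    have : 0 < (A/B)*(k-A) := mul_pos (by positivity) hkA
    linarith
  have hs2 : (Real.sqrt (1 + (A/B)*(k-A)))^2 = 1 + (A/B)*(k-A) :=
    Real.sq_sqrt hxpos.le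
  have hsnn : 0 ≤ Real.sqrt (1 + (A/B)*(k-A)) := Real.sqrt_nonneg _
  set s : ℝ := Real.sqrt (1 + (A/B)*(k-A))
  have h1 : 0 < s + 1 := by linarith
  rw [div_mul_eq_mul_div, div_eq_div_iff (by positivity) (by positivity)]
  have hd : s^2 - 1 = (A/B)*(k-A) := by linarith
  calc B*(s-1)*(k*(s+1)) = B*k*(s^2-1) := by ring
    _ = B*k*((A/B)*(k-A)) := by rw [hd]
    _ = A*(k*(k-A)) := by field_simp

theorem pstar_increasing_in_A (B k : ℝ) (hB : 0 < B) (hk : 0 < k)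
    (pstar : ℝ → ℝ)
    (hp : ∀ A, pstar A = B/(k*(k-A)) * (Real.sqrt (1 + (A/B)*(k-A)) - 1)) :
    ∀ A₁ A₂ : ℝ, 0 < A₁ → A₁ < A₂ → A₂ < k → pstar A₁ < pstar A₂ := by
  intro A₁ A₂ h1 h12 h2k
  have h1k : A₁ < k := lt_trans h12 h2k
  have h2 : 0 < A₂ := lt_trans h1 h12
  rw [hp, hp, pstar_alt B k A₁ hB hk h1 h1k, pstar_alt B k A₂ hB hk h2 h2k]
  have hx1pos : (0:ℝ) < 1 + (A₁/B)*(k-A₁) := by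
    have : 0 < (A₁/B)*(k-A₁) := mul_pos (by positivity) (by linarith)
    linarith
  have hx2pos : (0:ℝ) < 1 + (A₂/B)*(k-A₂) := by
    have : 0 < (A₂/B)*(k-A₂) := mul_pos (by positivity) (by linarith)
    linarith
  have hs1sq : (Real.sqrt (1 + (A₁/B)*(k-A₁)))^2 = 1 + (A₁/B)*(k-A₁) :=
    Real.sq_sqrt hx1pos.le
  have hs2sq : (Real.sqrt (1 + (A₂/B)*(k-A₂)))^2 = 1 + (A₂/B)*(k-A₂) :=
    Real.sq_sqrt hx2pos.le
  have hs1nn : 0 ≤ Real.sqrt (1 + (A₁/B)*(k-A₁)) := Real.sqrt_nonneg _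
  have hs2nn : 0 ≤ Real.sqrt (1 + (A₂/B)*(k-A₂)) := Real.sqrt_nonneg _
  set s₁ : ℝ := Real.sqrt (1 + (A₁/B)*(k-A₁))
  set s₂ : ℝ := Real.sqrt (1 + (A₂/B)*(k-A₂))
  have hd1 : 0 < k * (s₁ + 1) := by positivity
  have hd2 : 0 < k * (s₂ + 1) := by positivity
  rw [div_lt_div_iff₀ hd1 hd2]
  have key : A₁ * s₂ < A₂ * s₁ := by
    have hsq : (A₁ * s₂)^2 < (A₂ * s₁)^2 := by
      have e1 : (A₁ * s₂)^2 = A₁^2 * (1 + (A₂/B)*(k-A₂)) := by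
        rw [mul_pow, hs2sq]
      have e2 : (A₂ * s₁)^2 = A₂^2 * (1 + (A₁/B)*(k-A₁)) := by
        rw [mul_pow, hs1sq]
      rw [e1, e2]
      have hBinv : (0:ℝ) < B⁻¹ := by positivity
      have expand : A₂^2 * (1 + (A₁/B)*(k-A₁)) - A₁^2 * (1 + (A₂/B)*(k-A₂))
          = (A₂^2 - A₁^2) + B⁻¹ * (A₁ * A₂ * (A₂ - A₁) * k) := by
        field_simp; ring
      nlinarith [mul_pos hBinv
        (mul_pos (mul_pos (mul_pos h1 h2) (by linarith : (0:ℝ) < A₂ - A₁)) hk),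
        mul_pos (by linarith : (0:ℝ) < A₂ - A₁) (by linarith : (0:ℝ) < A₂ + A₁)]
    exact lt_of_pow_lt_pow_left₀ 2 (by positivity) hsq
  nlinarith
end
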